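/- Let τ be a tracial functional on A and let a ∈ Aⁿ be divergence-free for τ. Then for all b, c ∈ A the integration-by-parts formula holds: τ((D_a b)·c) = −τ(b·(D_a c)). -/
import Mathlib


open scoped TensorProduct

noncomputable section

/-- The free algebra `A = ℂ⟨X₁,…,Xₙ⟩` on `n` generators. -/
abbrev FA (n : ℕ) := FreeAlgebra ℂ (Fin n)

/-- The generator `X i`. -/
def X {n : ℕ} (i : Fin n) : FA n := FreeAlgebra.ι ℂ i

/-- The monomial `X_{i₁} ⋯ X_{i_m}` associated to a list of indices. -/
def mono {n : ℕ} (l : List (Fin n)) : FA n := (l.map X).prod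

lemma mono_nil {n : ℕ} : mono ([] : List (Fin n)) = 1 := rfl

lemma mono_cons {n : ℕ} (i : Fin n) (l : List (Fin n)) : mono (i :: l) = X i * mono l := by
  simp [mono]

lemma mono_append {n : ℕ} (l l' : List (Fin n)) : mono (l ++ l') = mono l * mono l' := by
  simp [mono]

lemma span_mono {n : ℕ} :
    Submodule.span ℂ (Set.range (mono (n := n))) = ⊤ := by
  rw [eq_top_iff]
  rintro x -
  induction x using FreeAlgebra.induction with
  | grade0 c =>
      rw [Algebra.algebraMap_eq_smul_one]
      exact Submodule.smul_mem _ _ (Submodule.subset_span ⟨[], rfl⟩)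
  | grade1 i =>
      exact Submodule.subset_span ⟨[i], by simp [mono, X]⟩
  | mul x y hx hy =>
      refine Submodule.span_induction ?_ ?_ ?_ ?_ hx
      · rintro x ⟨l, rfl⟩
        refine Submodule.span_induction ?_ ?_ ?_ ?_ hy
        · rintro y ⟨l', rfl⟩
          exact Submodule.subset_span ⟨l ++ l', mono_append l l'⟩
        · simp
        · intro y z _ _ h1 h2; rw [mul_add]; exact Submodule.add_mem _ h1 h2
        · intro c y _ h1; rw [mul_smul_comm]; exact Submodule.smul_mem _ _ h1
      · simp
      · intro u v _ _ h1 h2; rw [add_mul]; exact Submodule.add_mem _ h1 h2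
      · intro c u _ h1; rw [smul_mul_assoc]; exact Submodule.smul_mem _ _ h1
  | add x y hx hy => exact Submodule.add_mem _ hx hy

/-- integration by parts: if `a ∈ Aⁿ` is divergence-free for a tracial
functional `τ`, then `τ((D_a b)·c) = −τ(b·(D_a c))` for all `b, c ∈ A`. -/
theorem stmt10 {n : ℕ} (hn : 1 ≤ n)
    (τ : FA n →ₗ[ℂ] ℂ) (htr : ∀ P Q : FA n, τ (P * Q) = τ (Q * P))
    (δ : Fin n → (FA n →ₗ[ℂ] FA n))
    (hδ : ∀ (j : Fin n) (l : List (Fin n)),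
      δ j (mono l) = ∑ k : Fin l.length,
        if l.get k = j then mono (l.drop (k.val + 1)) * mono (l.take k.val) else 0)
    (a : Fin n → FA n)
    (Da : FA n →ₗ[ℂ] FA n)
    (hDa : ∀ l : List (Fin n),
      Da (mono l) = ∑ k : Fin l.length,
        mono (l.take k.val) * a (l.get k) * mono (l.drop (k.val + 1)))
    (ha : ∀ R : FA n, ∑ j : Fin n, τ (a j * δ j R) = 0) :
    ∀ b c : FA n, τ (Da b * c) = - τ (b * Da c) := by
  have hspan := span_mono (n := n)
  have hmem : ∀ x : FA n, x ∈ Submodule.span ℂ (Set.range (mono (n := n))) := by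
    intro x; rw [hspan]; trivial
  -- Da of a cons
  have hcons : ∀ (i : Fin n) (l : List (Fin n)),
      Da (mono (i :: l)) = a i * mono l + X i * Da (mono l) := by
    intro i l
    rw [hDa (i :: l), hDa l, Finset.mul_sum]
    have e := Fin.sum_univ_succ (n := l.length)
      (f := fun k => mono ((i :: l).take k.val) * a ((i :: l).get k) *
        mono ((i :: l).drop (k.val + 1)))
    refine e.trans ?_
    simp [mono_cons, mono_nil, mul_assoc]
  -- Da 1 = 0
  have hone : Da (1 : FA n) = 0 := by
    have h := hDa []
    simpa [mono_nil] using h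
  -- Leibniz on pairs of monomials
  have hmm : ∀ l l' : List (Fin n),
      Da (mono l * mono l') = Da (mono l) * mono l' + mono l * Da (mono l') := by
    intro l l'
    induction l with
    | nil => simp [mono_nil, hone]
    | cons i t ih =>
        have e1 : mono (i :: t) * mono l' = mono (i :: (t ++ l')) := by
          rw [← mono_append]; rfl
        rw [e1, hcons, mono_append, ih, hcons, mono_cons]
        noncomm_ring
  -- Leibniz in general
  have leib : ∀ b c : FA n, Da (b * c) = Da b * c + b * Da c := by
    have step1 : ∀ (l : List (Fin n)) (c : FA n),
        Da (mono l * c) = Da (mono l) * c + mono l * Da c := by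
      intro l c
      refine Submodule.span_induction ?_ ?_ ?_ ?_ (hmem c)
      · rintro y ⟨l', rfl⟩; exact hmm l l'
      · simp
      · intro u v _ _ h1 h2
        rw [mul_add, map_add, h1, h2, map_add]
        noncomm_ring
      · intro r u _ h1
        rw [mul_smul_comm, map_smul, h1, map_smul]
        simp [smul_add, mul_smul_comm]
    intro b c
    refine Submodule.span_induction ?_ ?_ ?_ ?_ (hmem b)
    · rintro y ⟨l, rfl⟩; exact step1 l c
    · simp
    · intro u v _ _ h1 h2
      rw [add_mul, map_add, h1, h2, map_add]
      noncomm_ring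
    · intro r u _ h1
      rw [smul_mul_assoc, map_smul, h1, map_smul]
      simp [smul_add, smul_mul_assoc]
  -- τ ∘ Da vanishes
  have hzero : ∀ R : FA n, τ (Da R) = 0 := by
    intro R
    refine Submodule.span_induction ?_ ?_ ?_ ?_ (hmem R)
    · rintro y ⟨l, rfl⟩
      have h := ha (mono l)
      simp only [hδ, Finset.mul_sum, map_sum, mul_ite, mul_zero, apply_ite τ, map_zero] at h
      rw [Finset.sum_comm] at h
      simp only [Finset.sum_ite_eq, Finset.mem_univ, if_true] at h
      rw [hDa l, map_sum, ← h]
      refine Finset.sum_congr rfl fun k _ => ?_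
      calc τ (mono (l.take k.val) * a (l.get k) * mono (l.drop (k.val + 1)))
          = τ (mono (l.take k.val) * (a (l.get k) * mono (l.drop (k.val + 1)))) := by
            rw [mul_assoc]
        _ = τ ((a (l.get k) * mono (l.drop (k.val + 1))) * mono (l.take k.val)) := htr _ _
        _ = τ (a (l.get k) * (mono (l.drop (k.val + 1)) * mono (l.take k.val))) := by
            rw [mul_assoc]
    · simp
    · intro u v _ _ h1 h2; rw [map_add, map_add, h1, h2, add_zero]
    · intro r u _ h1; rw [map_smul, map_smul, h1, smul_zero]
  intro b c
  have h0 := hzero (b * c)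
  rw [leib b c, map_add] at h0
  linear_combination h0
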